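/- Let t : Fin n → A × B with n ≥ 1 model a bag relation. Then pdep(t) = 1 if and only if t satisfies the FD X→Y. -/

import Mathlib

/-! For each X-value `a`, the conditional probabilities `p(b∣a)` lie in `[0, 1]` and sum to `1`,
so `Σ_b p(b∣a)² ≤ 1`, with equality iff every `p(b∣a)` is `0` or `1`, i.e. iff all tuples with
X-value `a` share one Y-value. As the weights `p₁(a)` are positive and sum to `1`, `pdep = 1`
forces equality for every `a`. -/

namespace AFD

open Finset

variable {A B : Type*}

/-- Number of indices with X-value `a`. -/
def c1 {n : ℕ} [DecidableEq A] (t : Fin n → A × B) (a : A) : ℕ :=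
  (Finset.univ.filter fun i => (t i).1 = a).card

/-- Number of indices with Y-value `b`. -/
def c2 {n : ℕ} [DecidableEq B] (t : Fin n → A × B) (b : B) : ℕ :=
  (Finset.univ.filter fun i => (t i).2 = b).card

/-- Number of indices with tuple value `(a, b)`. -/
def cnt {n : ℕ} [DecidableEq A] [DecidableEq B] (t : Fin n → A × B) (a : A) (b : B) : ℕ :=
  (Finset.univ.filter fun i => t i = (a, b)).card

/-- Marginal probability of X-value `a`. -/
noncomputable def p1 {n : ℕ} [DecidableEq A] (t : Fin n → A × B) (a : A) : ℝ :=
  (c1 t a : ℝ) / n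

/-- Marginal probability of Y-value `b`. -/
noncomputable def p2 {n : ℕ} [DecidableEq B] (t : Fin n → A × B) (b : B) : ℝ :=
  (c2 t b : ℝ) / n

/-- Joint probability of `(a, b)`. -/
noncomputable def pJ {n : ℕ} [DecidableEq A] [DecidableEq B] (t : Fin n → A × B)
    (a : A) (b : B) : ℝ :=
  (cnt t a b : ℝ) / n

/-- Conditional probability of Y-value `b` given X-value `a` (with the `0/0 = 0` convention,
which is automatic for real division in Lean). -/
noncomputable def pC {n : ℕ} [DecidableEq A] [DecidableEq B] (t : Fin n → A × B)
    (a : A) (b : B) : ℝ :=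
  pJ t a b / p1 t a

/-- The set of distinct X-values. -/
def domX {n : ℕ} [DecidableEq A] (t : Fin n → A × B) : Finset A :=
  Finset.univ.image fun i => (t i).1

/-- The set of distinct Y-values. -/
def domY {n : ℕ} [DecidableEq B] (t : Fin n → A × B) : Finset B :=
  Finset.univ.image fun i => (t i).2

/-- The set of distinct tuples. -/
def domXY {n : ℕ} [DecidableEq A] [DecidableEq B] (t : Fin n → A × B) : Finset (A × B) :=
  Finset.univ.image t

/-- The probabilistic dependency `pdep(X → Y)`. -/
noncomputable def pdep {n : ℕ} [DecidableEq A] [DecidableEq B] (t : Fin n → A × B) : ℝ :=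
  ∑ a ∈ domX t, p1 t a * ∑ b ∈ domY t, (pC t a b) ^ 2

/-- The probabilistic self-dependency `pdep(Y)`. -/
noncomputable def pdepY {n : ℕ} [DecidableEq B] (t : Fin n → A × B) : ℝ :=
  ∑ b ∈ domY t, (p2 t b) ^ 2

/-- The (X;Y)-permutation of `t` induced by the permutation `σ`. -/
def permRel {n : ℕ} (t : Fin n → A × B) (σ : Equiv.Perm (Fin n)) : Fin n → A × B :=
  fun i => ((t i).1, (t (σ i)).2)

/-- `t` satisfies the functional dependency X → Y. -/
def satFD {n : ℕ} (t : Fin n → A × B) : Prop :=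
  ∀ i j, (t i).1 = (t j).1 → (t i).2 = (t j).2

section SumLemmas

variable {ι R : Type*} [CommRing R] [LinearOrder R] [IsStrictOrderedRing R] {s : Finset ι}

theorem sum_sq_eq_sum_iff_of_nonneg_of_le_one {f : ι → R} (h0 : ∀ i ∈ s, 0 ≤ f i)
    (h1 : ∀ i ∈ s, f i ≤ 1) :
    ∑ i ∈ s, f i ^ 2 = ∑ i ∈ s, f i ↔ ∀ i ∈ s, f i = 0 ∨ f i = 1 := by
  rw [sum_eq_sum_iff_of_le fun i hi => sq_le (h0 i hi) (h1 i hi)]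
  simp only [sq, ← IsIdempotentElem.iff_eq_zero_or_one, IsIdempotentElem]

theorem sum_mul_eq_sum_iff_of_le_one {w g : ι → R} (hw : ∀ i ∈ s, 0 < w i) (hg : ∀ i ∈ s, g i ≤ 1) :
    ∑ i ∈ s, w i * g i = ∑ i ∈ s, w i ↔ ∀ i ∈ s, g i = 1 := by
  rw [sum_eq_sum_iff_of_le fun i hi => mul_le_of_le_one_right (hw i hi).le (hg i hi)]
  exact forall₂_congr fun i hi => mul_eq_left₀ (hw i hi).ne'

end SumLemmas

section Counts

variable {n : ℕ} (t : Fin n → A × B)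

theorem mem_domX [DecidableEq A] (i : Fin n) : (t i).1 ∈ domX t :=
  mem_image_of_mem _ (mem_univ i)

theorem mem_domY [DecidableEq B] (i : Fin n) : (t i).2 ∈ domY t :=
  mem_image_of_mem _ (mem_univ i)

theorem sum_c1 [DecidableEq A] : ∑ a ∈ domX t, c1 t a = n := by
  have := card_eq_sum_card_image (fun i => (t i).1) univ
  rwa [card_univ, Fintype.card_fin, eq_comm] at this

theorem sum_cnt [DecidableEq A] [DecidableEq B] (a : A) :
    ∑ b ∈ domY t, cnt t a b = c1 t a := by
  rw [c1, card_eq_sum_card_fiberwise fun i _ => mem_domY t i]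
  refine sum_congr rfl fun b _ => congrArg card ?_
  ext i
  simp [Prod.ext_iff]

theorem c1_pos [DecidableEq A] {a : A} (ha : a ∈ domX t) : 0 < c1 t a := by
  obtain ⟨i, -, rfl⟩ := mem_image.1 ha
  exact card_pos.2 ⟨i, by simp⟩

theorem filter_eq_subset_filter_fst_eq [DecidableEq A] [DecidableEq B] (a : A) (b : B) :
    univ.filter (fun i => t i = (a, b)) ⊆ univ.filter fun i => (t i).1 = a := by
  intro i
  simp +contextual

theorem cnt_le_c1 [DecidableEq A] [DecidableEq B] (a : A) (b : B) : cnt t a b ≤ c1 t a :=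
  card_le_card (filter_eq_subset_filter_fst_eq t a b)

theorem cnt_eq_c1_iff [DecidableEq A] [DecidableEq B] (a : A) (b : B) :
    cnt t a b = c1 t a ↔ ∀ i, (t i).1 = a → (t i).2 = b := by
  rw [le_antisymm_iff, and_iff_right (cnt_le_c1 t a b), cnt, c1,
    eq_iff_card_le_of_subset (filter_eq_subset_filter_fst_eq t a b)]
  simp [Finset.ext_iff, Prod.ext_iff]

theorem satFD_iff_forall_cnt [DecidableEq A] [DecidableEq B] :
    satFD t ↔ ∀ a ∈ domX t, ∀ b ∈ domY t, cnt t a b = 0 ∨ cnt t a b = c1 t a := by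
  constructor
  · intro hFD a _ b _
    refine or_iff_not_imp_left.2 fun hpos => (cnt_eq_c1_iff t a b).2 fun j hj => ?_
    obtain ⟨i, hi⟩ := card_ne_zero.1 hpos
    rw [mem_filter, Prod.ext_iff] at hi
    exact (hFD j i (hj.trans hi.2.1.symm)).trans hi.2.2
  · intro hcnt i j hij
    have hi : i ∈ univ.filter fun k => t k = ((t i).1, (t i).2) := by simp
    have hfull := (hcnt _ (mem_domX t i) _ (mem_domY t i)).resolve_left (card_ne_zero_of_mem hi)
    exact ((cnt_eq_c1_iff t _ _).1 hfull j hij.symm).symm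

end Counts

section Probabilities

variable {n : ℕ} (t : Fin n → A × B)

theorem sum_p1 [DecidableEq A] (hn : 1 ≤ n) : ∑ a ∈ domX t, p1 t a = 1 := by
  have hn : (n : ℝ) ≠ 0 := by positivity
  simp only [p1, ← sum_div, div_eq_one_iff_eq hn]
  exact_mod_cast sum_c1 t

theorem p1_pos [DecidableEq A] {a : A} (ha : a ∈ domX t) : 0 < p1 t a := by
  obtain ⟨i, -, -⟩ := mem_image.1 ha
  exact div_pos (by exact_mod_cast c1_pos t ha) (by exact_mod_cast i.pos)

theorem pC_eq_cnt_div_c1 [DecidableEq A] [DecidableEq B] (a : A) (b : B) :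
    pC t a b = cnt t a b / c1 t a := by
  rcases eq_or_ne n 0 with rfl | hn
  · simp [pC, pJ, p1, cnt, c1]
  · exact div_div_div_cancel_right₀ (Nat.cast_ne_zero.2 hn) _ _

theorem pC_nonneg [DecidableEq A] [DecidableEq B] (a : A) (b : B) : 0 ≤ pC t a b := by
  rw [pC_eq_cnt_div_c1]
  positivity

theorem pC_le_one [DecidableEq A] [DecidableEq B] (a : A) (b : B) : pC t a b ≤ 1 := by
  rw [pC_eq_cnt_div_c1]
  exact div_le_one_of_le₀ (by exact_mod_cast cnt_le_c1 t a b) (Nat.cast_nonneg _)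

theorem sum_pC [DecidableEq A] [DecidableEq B] {a : A} (ha : a ∈ domX t) :
    ∑ b ∈ domY t, pC t a b = 1 := by
  have hc : (c1 t a : ℝ) ≠ 0 := by exact_mod_cast (c1_pos t ha).ne'
  simp only [pC_eq_cnt_div_c1, ← sum_div, div_eq_one_iff_eq hc]
  exact_mod_cast sum_cnt t a

theorem sum_pC_sq_le_one [DecidableEq A] [DecidableEq B] {a : A} (ha : a ∈ domX t) :
    ∑ b ∈ domY t, pC t a b ^ 2 ≤ 1 :=
  sum_pC t ha ▸ sum_le_sum fun b _ => sq_le (pC_nonneg t a b) (pC_le_one t a b)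

theorem pC_eq_zero_or_one_iff [DecidableEq A] [DecidableEq B] {a : A} (ha : a ∈ domX t) (b : B) :
    pC t a b = 0 ∨ pC t a b = 1 ↔ cnt t a b = 0 ∨ cnt t a b = c1 t a := by
  have hc : (c1 t a : ℝ) ≠ 0 := by exact_mod_cast (c1_pos t ha).ne'
  rw [pC_eq_cnt_div_c1, div_eq_zero_iff, div_eq_one_iff_eq hc, or_iff_left hc]
  norm_cast

end Probabilities

/-- `pdep(t) = 1` if and only if `t` satisfies the FD X→Y. -/
theorem pdep_eq_one_iff_satFD {A B : Type*} [DecidableEq A] [DecidableEq B]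
    {n : ℕ} (hn : 1 ≤ n) (t : Fin n → A × B) :
    pdep t = 1 ↔ satFD t := by
  calc pdep t = 1
      ↔ ∑ a ∈ domX t, p1 t a * ∑ b ∈ domY t, pC t a b ^ 2 = ∑ a ∈ domX t, p1 t a := by
        rw [pdep, sum_p1 t hn]
    _ ↔ ∀ a ∈ domX t, ∑ b ∈ domY t, pC t a b ^ 2 = 1 :=
        sum_mul_eq_sum_iff_of_le_one (fun a ha => p1_pos t ha) fun a ha => sum_pC_sq_le_one t ha
    _ ↔ ∀ a ∈ domX t, ∀ b ∈ domY t, pC t a b = 0 ∨ pC t a b = 1 := forall₂_congr fun a ha => by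
        rw [← sum_sq_eq_sum_iff_of_nonneg_of_le_one (fun b _ => pC_nonneg t a b)
          (fun b _ => pC_le_one t a b), sum_pC t ha]
    _ ↔ ∀ a ∈ domX t, ∀ b ∈ domY t, cnt t a b = 0 ∨ cnt t a b = c1 t a :=
        forall₂_congr fun a ha => forall₂_congr fun b _ => pC_eq_zero_or_one_iff t ha b
    _ ↔ satFD t := (satFD_iff_forall_cnt t).symm

end AFD
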